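/- arXiv:1810.11660 — 2 statements merged into one kernel-verified Lean document; each statement's English description precedes it below -/
import Mathlib

section
/- Fix n ≥ 5, α ∈ {0,1} (with α = 0 when n is odd), and structure constants defining the products [e_i,e_j] for 2 ≤ i < j ≤ n−1 of a third-family filiform Leibniz algebra. Then for any complex parameters θ_1, θ_2, θ_3, the algebra L(θ_1,θ_2,θ_3) is strongly nilpotent if and only if the algebra L(0,0,0) is strongly nilpotent. -/
open Finset

/-- The basis vector `e_i` (1-indexed) of `ℂ^n`; zero if `i` is out of range. -/
noncomputable def E (n : ℕ) (i : ℕ) : Fin n → ℂ :=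
  if h : 1 ≤ i ∧ i ≤ n then Pi.single (⟨i - 1, by omega⟩ : Fin n) 1 else 0

/-- The bilinear bracket on `ℂ^n` determined by the products `m i j` of the
(1-indexed) basis vectors `e_i`, `e_j`. -/
noncomputable def bracketOf (n : ℕ) (m : ℕ → ℕ → Fin n → ℂ)
    (x y : Fin n → ℂ) : Fin n → ℂ :=
  ∑ i : Fin n, ∑ j : Fin n, (x i * y j) • m (i.1 + 1) (j.1 + 1)

/-- `P` is a pre-derivation of the algebra with bracket `br`. -/
def IsPreDeriv (n : ℕ) (br : (Fin n → ℂ) → (Fin n → ℂ) → Fin n → ℂ)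
    (P : Module.End ℂ (Fin n → ℂ)) : Prop :=
  ∀ x y z, P (br (br x y) z) =
    br (br (P x) y) z + br (br x (P y)) z + br (br x y) (P z)

/-- Multiplication table of the third family `L(θ₁,θ₂,θ₃)` of filiform Leibniz
algebras, with prescribed skew-symmetric products `μ i j = [eᵢ,eⱼ]`
for `2 ≤ i < j ≤ n-1`:
`[eᵢ,e₁]=e_{i+1}` for `2 ≤ i ≤ n-1`; `[e₁,eᵢ]=-e_{i+1}` for `3 ≤ i ≤ n-1`;
`[e₁,e₁]=θ₁ eₙ`; `[e₁,e₂]=-e₃+θ₂ eₙ`; `[e₂,e₂]=θ₃ eₙ`;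
`[eᵢ,eⱼ]=-[eⱼ,eᵢ]=μ i j` for `2 ≤ i < j ≤ n-1`; all other products zero. -/
noncomputable def F3mul (n : ℕ) (θ₁ θ₂ θ₃ : ℂ) (μ : ℕ → ℕ → Fin n → ℂ)
    (i j : ℕ) : Fin n → ℂ :=
  if i = 1 ∧ j = 1 then θ₁ • E n n
  else if i = 1 ∧ j = 2 then -E n 3 + θ₂ • E n n
  else if i = 2 ∧ j = 2 then θ₃ • E n n
  else if 2 ≤ i ∧ i ≤ n - 1 ∧ j = 1 then E n (i + 1)
  else if i = 1 ∧ 3 ≤ j ∧ j ≤ n - 1 then -E n (j + 1)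
  else if 2 ≤ i ∧ i < j ∧ j ≤ n - 1 then μ i j
  else if 2 ≤ j ∧ j < i ∧ i ≤ n - 1 then -μ j i
  else 0

lemma E_apply_ne (n m : ℕ) (k : Fin n) (h : k.1 + 1 ≠ m) : E n m k = 0 := by
  unfold E
  split_ifs with h1
  · have hk : k ≠ (⟨m - 1, by omega⟩ : Fin n) := by
      intro he
      have := congrArg Fin.val he
      simp only [] at this
      omega
    rw [Pi.single_apply, if_neg hk]
  · rfl

lemma bracketOf_apply (n : ℕ) (m : ℕ → ℕ → Fin n → ℂ) (x y : Fin n → ℂ) (k : Fin n) :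
    bracketOf n m x y k = ∑ i : Fin n, ∑ j : Fin n, x i * y j * m (i.1 + 1) (j.1 + 1) k := by
  simp [bracketOf, Finset.sum_apply, Pi.smul_apply, smul_eq_mul]

lemma mu_apply_zero (n : ℕ) (μ : ℕ → ℕ → Fin n → ℂ)
    (hspan : ∀ i j, 2 ≤ i → i < j → j ≤ n - 1 →
      μ i j ∈ Submodule.span ℂ (E n '' Set.Icc (i + j + 1) n))
    (a b : ℕ) (ha : 2 ≤ a) (hab : a < b) (hb : b ≤ n - 1) (k : Fin n)
    (hk : k.1 + 1 < a + b + 1) : μ a b k = 0 := by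
  have h := hspan a b ha hab hb
  have hle : Submodule.span ℂ (E n '' Set.Icc (a + b + 1) n) ≤
      LinearMap.ker (LinearMap.proj k : (Fin n → ℂ) →ₗ[ℂ] ℂ) := by
    rw [Submodule.span_le]
    rintro v ⟨m, hm, rfl⟩
    have hm' := Set.mem_Icc.mp hm
    simp only [SetLike.mem_coe, LinearMap.mem_ker, LinearMap.proj_apply]
    exact E_apply_ne n m k (by omega)
  have := hle h
  simpa using this

lemma F3_lo (n : ℕ) (hn : 5 ≤ n) (θ₁ θ₂ θ₃ : ℂ) (μ : ℕ → ℕ → Fin n → ℂ)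
    (hspan : ∀ i j, 2 ≤ i → i < j → j ≤ n - 1 →
      μ i j ∈ Submodule.span ℂ (E n '' Set.Icc (i + j + 1) n))
    (a b : ℕ) (k : Fin n) (hk : k.1 < 2) :
    F3mul n θ₁ θ₂ θ₃ μ a b k = 0 := by
  unfold F3mul
  split_ifs with h1 h2 h3 h4 h5 h6 h7
  · simp [E_apply_ne n n k (by omega)]
  · simp [E_apply_ne n 3 k (by omega), E_apply_ne n n k (by omega)]
  · simp [E_apply_ne n n k (by omega)]
  · exact E_apply_ne n (a + 1) k (by omega)
  · simp [E_apply_ne n (b + 1) k (by omega)]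
  · exact mu_apply_zero n μ hspan a b h6.1 h6.2.1 h6.2.2 k (by omega)
  · simp [mu_apply_zero n μ hspan b a h7.1 h7.2.1 h7.2.2 k (by omega)]
  · rfl

lemma F3_hi (n : ℕ) (θ₁ θ₂ θ₃ : ℂ) (μ : ℕ → ℕ → Fin n → ℂ) (a b : ℕ) (ha : 3 ≤ a) :
    F3mul n θ₁ θ₂ θ₃ μ a b = F3mul n 0 0 0 μ a b := by
  unfold F3mul
  split_ifs <;> first | rfl | (exfalso; omega)

lemma F3_top (n : ℕ) (hn : 5 ≤ n) (θ₁ θ₂ θ₃ : ℂ) (μ : ℕ → ℕ → Fin n → ℂ) (b : ℕ) :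
    F3mul n θ₁ θ₂ θ₃ μ n b = 0 := by
  unfold F3mul
  split_ifs <;> first | rfl | (exfalso; omega)

lemma F3_ne_top (n : ℕ) (θ₁ θ₂ θ₃ : ℂ) (μ : ℕ → ℕ → Fin n → ℂ) (a b : ℕ) (k : Fin n)
    (hk : k.1 + 1 < n) :
    F3mul n θ₁ θ₂ θ₃ μ a b k = F3mul n 0 0 0 μ a b k := by
  have hE : E n n k = 0 := E_apply_ne n n k (by omega)
  unfold F3mul
  split_ifs <;> simp [hE]

lemma br_lo (n : ℕ) (hn : 5 ≤ n) (θ₁ θ₂ θ₃ : ℂ) (μ : ℕ → ℕ → Fin n → ℂ)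
    (hspan : ∀ i j, 2 ≤ i → i < j → j ≤ n - 1 →
      μ i j ∈ Submodule.span ℂ (E n '' Set.Icc (i + j + 1) n))
    (x y : Fin n → ℂ) (k : Fin n) (hk : k.1 < 2) :
    bracketOf n (F3mul n θ₁ θ₂ θ₃ μ) x y k = 0 := by
  rw [bracketOf_apply]
  refine Finset.sum_eq_zero fun i _ => Finset.sum_eq_zero fun j _ => ?_
  rw [F3_lo n hn θ₁ θ₂ θ₃ μ hspan _ _ k hk, mul_zero]

lemma key_lemma (n : ℕ) (hn : 5 ≤ n) (μ : ℕ → ℕ → Fin n → ℂ)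
    (hspan : ∀ i j, 2 ≤ i → i < j → j ≤ n - 1 →
      μ i j ∈ Submodule.span ℂ (E n '' Set.Icc (i + j + 1) n))
    (θ₁ θ₂ θ₃ : ℂ) (x y z : Fin n → ℂ) :
    bracketOf n (F3mul n θ₁ θ₂ θ₃ μ) (bracketOf n (F3mul n θ₁ θ₂ θ₃ μ) x y) z =
    bracketOf n (F3mul n 0 0 0 μ) (bracketOf n (F3mul n 0 0 0 μ) x y) z := by
  funext k
  rw [bracketOf_apply n (F3mul n θ₁ θ₂ θ₃ μ) (bracketOf n (F3mul n θ₁ θ₂ θ₃ μ) x y) z k,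
    bracketOf_apply n (F3mul n 0 0 0 μ) (bracketOf n (F3mul n 0 0 0 μ) x y) z k]
  refine Finset.sum_congr rfl fun i _ => Finset.sum_congr rfl fun j _ => ?_
  have hilt := i.isLt
  by_cases hi : i.1 + 1 = n
  · rw [hi, F3_top n hn θ₁ θ₂ θ₃ μ (j.1 + 1), F3_top n hn 0 0 0 μ (j.1 + 1)]
    simp
  · by_cases hlo : i.1 < 2
    · rw [br_lo n hn θ₁ θ₂ θ₃ μ hspan x y i hlo, br_lo n hn 0 0 0 μ hspan x y i hlo]
      simp
    · have h1 : F3mul n θ₁ θ₂ θ₃ μ (i.1 + 1) (j.1 + 1) =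
          F3mul n 0 0 0 μ (i.1 + 1) (j.1 + 1) := F3_hi n θ₁ θ₂ θ₃ μ _ _ (by omega)
      have h2 : bracketOf n (F3mul n θ₁ θ₂ θ₃ μ) x y i =
          bracketOf n (F3mul n 0 0 0 μ) x y i := by
        rw [bracketOf_apply, bracketOf_apply]
        refine Finset.sum_congr rfl fun a _ => Finset.sum_congr rfl fun b _ => ?_
        rw [F3_ne_top n θ₁ θ₂ θ₃ μ _ _ i (by omega)]
      rw [h1, h2]

/-- Proposition 4.7: a third-family filiform Leibniz algebra `L(θ₁,θ₂,θ₃)` is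
strongly nilpotent (every pre-derivation is nilpotent) iff `L(0,0,0)` is
strongly nilpotent. -/
theorem stmt_8 (n : ℕ) (hn : 5 ≤ n) (α : ℂ) (hα : α = 0 ∨ α = 1)
    (hαodd : Odd n → α = 0) (μ : ℕ → ℕ → Fin n → ℂ)
    (hspan : ∀ i j, 2 ≤ i → i < j → j ≤ n - 1 →
      μ i j ∈ Submodule.span ℂ (E n '' Set.Icc (i + j + 1) n))
    (hmid : ∀ i, 2 ≤ i → 2 * i < n + 1 →
      μ i (n + 1 - i) = ((-1 : ℂ) ^ (i + 1) * α) • E n n)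
    (θ₁ θ₂ θ₃ : ℂ) :
    (∀ P : Module.End ℂ (Fin n → ℂ),
        IsPreDeriv n (bracketOf n (F3mul n θ₁ θ₂ θ₃ μ)) P → IsNilpotent P) ↔
    (∀ P : Module.End ℂ (Fin n → ℂ),
        IsPreDeriv n (bracketOf n (F3mul n 0 0 0 μ)) P → IsNilpotent P) := by
  have key := key_lemma n hn μ hspan θ₁ θ₂ θ₃
  have hiff : ∀ P : Module.End ℂ (Fin n → ℂ),
      IsPreDeriv n (bracketOf n (F3mul n θ₁ θ₂ θ₃ μ)) P ↔
      IsPreDeriv n (bracketOf n (F3mul n 0 0 0 μ)) P := by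
    intro P
    unfold IsPreDeriv
    constructor
    · intro h x y z
      simpa only [key] using h x y z
    · intro h x y z
      simp only [key]
      exact h x y z
  exact ⟨fun H P hP => H P ((hiff P).mpr hP), fun H P hP => H P ((hiff P).mp hP)⟩
end

section
/- Let n ≥ 5 and let L = F2(β_4,…,β_n,γ) be an n-dimensional complex filiform Leibniz algebra of the second family. For any pre-derivation P of L, writing P(e_2) = Σ_{t=1}^n b_t e_t in the basis e_1,…,e_n, one has b_1 = 0 and b_t = 0 for all 3 ≤ t ≤ n−2; that is, P(e_2) = b_2 e_2 + b_{n−1} e_{n−1} + b_n e_n. -/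
open Finset

/-- Multiplication table of the second family `F2(β₄,…,βₙ,γ)` of filiform Leibniz
algebras: `[e₁,e₁]=e₃`; `[eᵢ,e₁]=e_{i+1}` for `3 ≤ i ≤ n-1`;
`[e₁,e₂]=∑_{t=4}^{n} β_t e_t`; `[e₂,e₂]=γ eₙ`;
`[eⱼ,e₂]=∑_{t=j+2}^{n} β_{t-j+2} e_t` for `3 ≤ j ≤ n-2`; all other products zero. -/
noncomputable def F2mul (n : ℕ) (β : ℕ → ℂ) (γ : ℂ) (i j : ℕ) : Fin n → ℂ :=
  if i = 1 ∧ j = 1 then E n 3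
  else if 3 ≤ i ∧ i ≤ n - 1 ∧ j = 1 then E n (i + 1)
  else if i = 1 ∧ j = 2 then ∑ t ∈ Icc 4 n, β t • E n t
  else if i = 2 ∧ j = 2 then γ • E n n
  else if 3 ≤ i ∧ i ≤ n - 2 ∧ j = 2 then ∑ t ∈ Icc (i + 2) n, β (t - i + 2) • E n t
  else 0


section Aux
variable {n : ℕ}

lemma E_apply (i : ℕ) (k : Fin n) :
    E n i k = if i = (k : ℕ) + 1 then 1 else 0 := by
  unfold E
  split_ifs with h1 h2 h2
  · have hv : ((⟨i - 1, by omega⟩ : Fin n) : ℕ) = i - 1 := rfl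
    rw [Pi.single_apply, if_pos (Fin.ext (by rw [hv]; omega))]
  · have hv : ((⟨i - 1, by omega⟩ : Fin n) : ℕ) = i - 1 := rfl
    rw [Pi.single_apply, if_neg (fun hc => h2 (by rw [Fin.ext_iff, hv] at hc; omega))]
  · exact absurd ⟨by omega, by omega⟩ h1
  · rfl

lemma bracketOf_zero_left (m : ℕ → ℕ → Fin n → ℂ) (y : Fin n → ℂ) :
    bracketOf n m 0 y = 0 := by
  unfold bracketOf; simp

lemma bracketOf_add_left (m : ℕ → ℕ → Fin n → ℂ) (x x' y : Fin n → ℂ) :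
    bracketOf n m (x + x') y = bracketOf n m x y + bracketOf n m x' y := by
  unfold bracketOf
  rw [← Finset.sum_add_distrib]
  refine Finset.sum_congr rfl fun i _ => ?_
  rw [← Finset.sum_add_distrib]
  refine Finset.sum_congr rfl fun j _ => ?_
  rw [Pi.add_apply, add_mul, add_smul]

lemma bracketOf_smul_left (m : ℕ → ℕ → Fin n → ℂ) (c : ℂ) (x y : Fin n → ℂ) :
    bracketOf n m (c • x) y = c • bracketOf n m x y := by
  unfold bracketOf
  rw [Finset.smul_sum]
  refine Finset.sum_congr rfl fun i _ => ?_
  rw [Finset.smul_sum]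
  refine Finset.sum_congr rfl fun j _ => ?_
  rw [Pi.smul_apply, smul_eq_mul, mul_assoc, mul_smul]

lemma bracketOf_sum_smul_left (m : ℕ → ℕ → Fin n → ℂ) (s : Finset ℕ)
    (c : ℕ → ℂ) (f : ℕ → Fin n → ℂ) (y : Fin n → ℂ) :
    bracketOf n m (∑ t ∈ s, c t • f t) y = ∑ t ∈ s, c t • bracketOf n m (f t) y := by
  induction s using Finset.cons_induction with
  | empty => simpa using bracketOf_zero_left m y
  | cons a s ha ih =>
      rw [Finset.sum_cons, bracketOf_add_left, bracketOf_smul_left, ih, Finset.sum_cons]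

lemma bracketOf_single_left (m : ℕ → ℕ → Fin n → ℂ) (a : ℕ)
    (ha : 1 ≤ a) (ha' : a ≤ n) (y : Fin n → ℂ) :
    bracketOf n m (E n a) y = ∑ j : Fin n, y j • m a (j.1 + 1) := by
  unfold bracketOf
  have hv : ((⟨a - 1, by omega⟩ : Fin n) : ℕ) = a - 1 := rfl
  rw [Finset.sum_eq_single (⟨a - 1, by omega⟩ : Fin n)]
  · refine Finset.sum_congr rfl fun j _ => ?_
    rw [E_apply, if_pos (by rw [hv]; omega), one_mul, hv,
      show a - 1 + 1 = a from by omega]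
  · intro i _ hi
    refine Finset.sum_eq_zero fun j _ => ?_
    rw [Ne, Fin.ext_iff, hv] at hi
    rw [E_apply, if_neg (by omega), zero_mul, zero_smul]
  · intro h; exact absurd (Finset.mem_univ _) h

lemma bracketOf_single (m : ℕ → ℕ → Fin n → ℂ) (a b : ℕ)
    (ha : 1 ≤ a) (ha' : a ≤ n) (hb : 1 ≤ b) (hb' : b ≤ n) :
    bracketOf n m (E n a) (E n b) = m a b := by
  rw [bracketOf_single_left m a ha ha']
  have hv : ((⟨b - 1, by omega⟩ : Fin n) : ℕ) = b - 1 := rfl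
  rw [Finset.sum_eq_single (⟨b - 1, by omega⟩ : Fin n)]
  · rw [E_apply, if_pos (by rw [hv]; omega), one_smul, hv,
      show b - 1 + 1 = b from by omega]
  · intro j _ hj
    rw [Ne, Fin.ext_iff, hv] at hj
    rw [E_apply, if_neg (by omega), zero_smul]
  · intro h; exact absurd (Finset.mem_univ _) h

end Aux

lemma D_eval (n : ℕ) (hn : 5 ≤ n) (β : ℕ → ℂ) (γ : ℂ) (t : ℕ) (ht1 : 1 ≤ t) (ht2 : t ≤ n) :
    bracketOf n (F2mul n β γ) (bracketOf n (F2mul n β γ) (E n t) (E n 1)) (E n 1) =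
      if t = 1 then E n 4 else if 3 ≤ t ∧ t ≤ n - 2 then E n (t + 2) else 0 := by
  rw [bracketOf_single (F2mul n β γ) t 1 ht1 ht2 (by omega) (by omega)]
  by_cases h1 : t = 1
  · subst h1
    rw [if_pos rfl, show F2mul n β γ 1 1 = E n 3 from by unfold F2mul; rw [if_pos ⟨rfl, rfl⟩],
      bracketOf_single _ 3 1 (by omega) (by omega) (by omega) (by omega)]
    unfold F2mul
    split_ifs <;> first | rfl | (exfalso; omega)
  · rw [if_neg h1]
    by_cases h2 : 3 ≤ t ∧ t ≤ n - 1
    · have hft : F2mul n β γ t 1 = E n (t + 1) := by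
        unfold F2mul; split_ifs <;> first | rfl | (exfalso; omega)
      rw [hft, bracketOf_single _ (t + 1) 1 (by omega) (by omega) (by omega) (by omega)]
      by_cases h3 : t ≤ n - 2
      · rw [if_pos ⟨h2.1, h3⟩]
        unfold F2mul; split_ifs <;> first | rfl | (exfalso; omega)
      · rw [if_neg (by omega)]
        unfold F2mul; split_ifs <;> first | rfl | (exfalso; omega)
    · rw [if_neg (by omega)]
      have hft : F2mul n β γ t 1 = 0 := by
        unfold F2mul; split_ifs <;> first | rfl | (exfalso; omega)
      rw [hft, bracketOf_zero_left]

/-- For any pre-derivation `P` of a second-family filiform Leibniz algebra,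
writing `P(e₂) = ∑ bₜ eₜ`, one has `b₁ = 0` and `bₜ = 0` for `3 ≤ t ≤ n-2`;
that is, `P(e₂) = b₂e₂ + b_{n-1}e_{n-1} + bₙeₙ`. -/
theorem stmt_12 (n : ℕ) (hn : 5 ≤ n) (β : ℕ → ℂ) (γ : ℂ)
    (hleib : ∀ x y z : Fin n → ℂ,
      bracketOf n (F2mul n β γ) (bracketOf n (F2mul n β γ) x y) z =
        bracketOf n (F2mul n β γ) (bracketOf n (F2mul n β γ) x z) y +
        bracketOf n (F2mul n β γ) x (bracketOf n (F2mul n β γ) y z))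
    (P : Module.End ℂ (Fin n → ℂ))
    (hP : IsPreDeriv n (bracketOf n (F2mul n β γ)) P)
    (b : ℕ → ℂ) (hb : P (E n 2) = ∑ t ∈ Icc 1 n, b t • E n t) :
    b 1 = 0 ∧ (∀ t, 3 ≤ t → t ≤ n - 2 → b t = 0) ∧
      P (E n 2) = b 2 • E n 2 + b (n - 1) • E n (n - 1) + b n • E n n := by
  have h21 : bracketOf n (F2mul n β γ) (E n 2) (E n 1) = 0 := by
    rw [bracketOf_single _ 2 1 (by omega) (by omega) (by omega) (by omega)]
    unfold F2mul; split_ifs <;> first | rfl | (exfalso; omega)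
  have hlt1 : (1 : ℕ) < n := by omega
  have hmid : bracketOf n (F2mul n β γ)
      (bracketOf n (F2mul n β γ) (E n 2) (P (E n 1))) (E n 1) = 0 := by
    have h2v : bracketOf n (F2mul n β γ) (E n 2) (P (E n 1)) =
        (P (E n 1) ⟨1, hlt1⟩ * γ) • E n n := by
      rw [bracketOf_single_left _ 2 (by omega) (by omega)]
      rw [Finset.sum_eq_single (⟨1, hlt1⟩ : Fin n)]
      · have hF : F2mul n β γ 2 (((⟨1, hlt1⟩ : Fin n) : ℕ) + 1) = γ • E n n := by
          have hv : ((⟨1, hlt1⟩ : Fin n) : ℕ) = 1 := rfl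
          unfold F2mul; split_ifs <;> first | rfl | (exfalso; omega)
        rw [hF, smul_smul]
      · intro j _ hj
        have hj' : (j : ℕ) ≠ 1 := fun h => hj (Fin.ext h)
        have hF : F2mul n β γ 2 ((j : ℕ) + 1) = 0 := by
          unfold F2mul; split_ifs <;> first | rfl | (exfalso; omega)
        rw [hF, smul_zero]
      · intro h; exact absurd (Finset.mem_univ _) h
    have hFn1 : F2mul n β γ n 1 = 0 := by
      unfold F2mul; split_ifs <;> first | rfl | (exfalso; omega)
    rw [h2v, bracketOf_smul_left,
      bracketOf_single _ n 1 (by omega) (by omega) (by omega) (by omega), hFn1, smul_zero]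
  have key : (0 : Fin n → ℂ) =
      ∑ t ∈ Icc 1 n, b t •
        (if t = 1 then E n 4 else if 3 ≤ t ∧ t ≤ n - 2 then E n (t + 2) else 0) := by
    have h := hP (E n 2) (E n 1) (E n 1)
    rw [h21, bracketOf_zero_left, map_zero, hmid, bracketOf_zero_left, add_zero, add_zero] at h
    rw [hb, bracketOf_sum_smul_left, bracketOf_sum_smul_left] at h
    refine h.trans (Finset.sum_congr rfl fun t ht => ?_)
    rw [Finset.mem_Icc] at ht
    rw [D_eval n hn β γ t ht.1 ht.2]
  have hlt3 : (3 : ℕ) < n := by omega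
  have hb1 : b 1 = 0 := by
    have h := congrFun key ⟨3, hlt3⟩
    have hv : ((⟨3, hlt3⟩ : Fin n) : ℕ) = 3 := rfl
    rw [Finset.sum_apply, Finset.sum_eq_single 1] at h
    · rw [if_pos rfl, Pi.smul_apply, E_apply, hv, if_pos (by norm_num),
        smul_eq_mul, mul_one] at h
      exact h.symm
    · intro t ht hne
      rw [Finset.mem_Icc] at ht
      rw [if_neg hne]
      by_cases h3 : 3 ≤ t ∧ t ≤ n - 2
      · rw [if_pos h3, Pi.smul_apply, E_apply, hv, if_neg (by omega), smul_zero]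
      · rw [if_neg h3, Pi.smul_apply, Pi.zero_apply, smul_zero]
    · intro hnot; exact absurd (Finset.mem_Icc.mpr ⟨le_rfl, by omega⟩) hnot
  have hbmid : ∀ t, 3 ≤ t → t ≤ n - 2 → b t = 0 := by
    intro s hs1 hs2
    have hlt : s + 1 < n := by omega
    have h := congrFun key ⟨s + 1, hlt⟩
    have hv : ((⟨s + 1, hlt⟩ : Fin n) : ℕ) = s + 1 := rfl
    rw [Finset.sum_apply, Finset.sum_eq_single s] at h
    · rw [if_neg (by omega), if_pos ⟨hs1, hs2⟩, Pi.smul_apply, E_apply, hv,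
        if_pos (by omega), smul_eq_mul, mul_one] at h
      exact h.symm
    · intro t ht hne
      rw [Finset.mem_Icc] at ht
      by_cases h1 : t = 1
      · subst h1
        rw [if_pos rfl, Pi.smul_apply, E_apply, hv, if_neg (by omega), smul_zero]
      · rw [if_neg h1]
        by_cases h3 : 3 ≤ t ∧ t ≤ n - 2
        · rw [if_pos h3, Pi.smul_apply, E_apply, hv, if_neg (by omega), smul_zero]
        · rw [if_neg h3, Pi.smul_apply, Pi.zero_apply, smul_zero]
    · intro hnot; exact absurd (Finset.mem_Icc.mpr ⟨by omega, by omega⟩) hnot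
  refine ⟨hb1, hbmid, ?_⟩
  have hsub : ({2, n - 1, n} : Finset ℕ) ⊆ Icc 1 n := by
    intro x hx
    simp only [Finset.mem_insert, Finset.mem_singleton] at hx
    rw [Finset.mem_Icc]; omega
  have hzero : ∀ x ∈ Icc 1 n, x ∉ ({2, n - 1, n} : Finset ℕ) → b x • E n x = 0 := by
    intro x hx hxn
    rw [Finset.mem_Icc] at hx
    simp only [Finset.mem_insert, Finset.mem_singleton, not_or] at hxn
    rcases (show x = 1 ∨ (3 ≤ x ∧ x ≤ n - 2) from by omega) with h | h
    · rw [h, hb1, zero_smul]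
    · rw [hbmid x h.1 h.2, zero_smul]
  rw [hb, ← Finset.sum_subset hsub hzero,
    Finset.sum_insert (by simp only [Finset.mem_insert, Finset.mem_singleton]; push_neg; omega),
    Finset.sum_insert (by simp only [Finset.mem_singleton]; omega),
    Finset.sum_singleton, ← add_assoc]
end
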